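/- arXiv:1906.02715 — 4 statements merged into one kernel-verified Lean document; each statement's English description precedes it below -/
import Mathlib

section
/- Any finite tree with n vertices admits a Pythagorean embedding into ℝ^{n-1}; that is, there exists a map f from the vertex set of the tree to ℝ^{n-1} such that for all vertices x, y, ‖f(x) − f(y)‖² = d(x, y), where d is the tree metric. -/
/-! Root the tree at a vertex `r` and send `v` to the `0/1` vector, indexed by the `n - 1` edges,
that marks the edges of the path from `r` to `v`. Since paths in a forest are unique, the paths
from `r` to `x` and to `y` differ exactly in the edges of the path from `x` to `y`, so the squared
distance of the two vectors is the number of those edges, which is `d(x, y)`. -/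

open Finset
open scoped symmDiff

theorem EuclideanSpace.norm_sub_sq_indicator_eq_card_symmDiff {ι α : Type*} [Fintype ι]
    [DecidableEq α] {g : ι → α} (hg : g.Injective) {s t : Finset α}
    (hs : ↑s ⊆ Set.range g) (ht : ↑t ⊆ Set.range g) :
    ‖(WithLp.toLp 2 fun i => if g i ∈ s then (1 : ℝ) else 0) -
        WithLp.toLp 2 fun i => if g i ∈ t then (1 : ℝ) else 0‖ ^ 2 = #(s ∆ t) := by
  classical
  have hcoord : ∀ i, ‖(if g i ∈ s then (1 : ℝ) else 0) - if g i ∈ t then 1 else 0‖ ^ 2 =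
      if g i ∈ s ∆ t then 1 else 0 := by
    intro i
    by_cases his : g i ∈ s <;> by_cases hit : g i ∈ t <;> simp [his, hit, mem_symmDiff]
  have hrange : ∀ a ∈ s ∆ t, a ∈ Set.range g := fun a ha =>
    (mem_union.mp (symmDiff_subset_union ha)).elim (fun h => hs h) (fun h => ht h)
  rw [EuclideanSpace.norm_sq_eq]
  simp only [WithLp.ofLp_sub, Pi.sub_apply, hcoord, sum_boole]
  rw [← filter_true_of_mem hrange, ← card_preimage _ _ hg.injOn]
  congr 2
  ext i
  simp [mem_preimage]

namespace SimpleGraph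

variable {V : Type*} [DecidableEq V] {G : SimpleGraph V}

theorem Walk.symmDiff_edges_concat {u v w : V} {p : G.Walk u v} (h : G.Adj v w)
    (hp : (p.concat h).IsPath) :
    p.edges.toFinset ∆ (p.concat h).edges.toFinset = {s(v, w)} := by
  have hnodup := hp.isTrail.edges_nodup
  rw [edges_concat, List.concat_eq_append, List.nodup_append] at hnodup
  have hnot : s(v, w) ∉ p.edges := fun hmem => hnodup.2.2 _ hmem _ (List.mem_singleton_self _) rfl
  ext e
  by_cases he : e = s(v, w) <;> simp [mem_symmDiff, edges_concat, he, hnot]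

theorem IsAcyclic.symmDiff_edges_of_adj (hG : G.IsAcyclic) {r x y : V} {p : G.Walk r x}
    {q : G.Walk r y} (hp : p.IsPath) (hq : q.IsPath) (h : G.Adj x y) :
    p.edges.toFinset ∆ q.edges.toFinset = {s(x, y)} := by
  by_cases hx : x ∈ q.support
  · obtain rfl := hG.path_concat hp hq h hx
    exact Walk.symmDiff_edges_concat h hq
  · have hy := hG.mem_support_of_ne_mem_support_of_adj_of_isPath hp hq h hx
    obtain rfl := hG.path_concat hq hp h.symm hy
    rw [symmDiff_comm, Walk.symmDiff_edges_concat h.symm hp, Sym2.eq_swap]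

theorem IsAcyclic.symmDiff_edges_eq_edges_of_isPath (hG : G.IsAcyclic) {r x y : V}
    {p : G.Walk r x} {q : G.Walk r y} (hp : p.IsPath) (hq : q.IsPath) {c : G.Walk x y}
    (hc : c.IsPath) : p.edges.toFinset ∆ q.edges.toFinset = c.edges.toFinset := by
  induction c with
  | nil =>
    obtain rfl : p = q := Subtype.mk.inj ((hG.subsingleton_path _ _).elim ⟨p, hp⟩ ⟨q, hq⟩)
    simp
  | @cons x v y h c ih =>
    have hv := (p.concat h).bypass_isPath
    have hnot : s(x, v) ∉ c.edges := (List.nodup_cons.mp hc.isTrail.edges_nodup).1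
    calc p.edges.toFinset ∆ q.edges.toFinset
        = p.edges.toFinset ∆ (p.concat h).bypass.edges.toFinset ∆
            ((p.concat h).bypass.edges.toFinset ∆ q.edges.toFinset) := by
          rw [symmDiff_assoc, symmDiff_symmDiff_cancel_left]
      _ = {s(x, v)} ∆ c.edges.toFinset := by
          rw [hG.symmDiff_edges_of_adj hp hv h, ih hv hq hc.of_cons]
      _ = (Walk.cons h c).edges.toFinset := by
          ext e
          by_cases he : e = s(x, v) <;> simp [mem_symmDiff, he, hnot]

theorem IsAcyclic.card_symmDiff_edges_eq_dist (hG : G.IsAcyclic) {r x y : V}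
    {p : G.Walk r x} {q : G.Walk r y} (hp : p.IsPath) (hq : q.IsPath) (hxy : G.Reachable x y) :
    #(p.edges.toFinset ∆ q.edges.toFinset) = G.dist x y := by
  obtain ⟨c, hc, hlen⟩ := hxy.exists_path_of_dist
  rw [hG.symmDiff_edges_eq_edges_of_isPath hp hq hc,
    List.toFinset_card_of_nodup hc.isTrail.edges_nodup, Walk.length_edges, hlen]

end SimpleGraph

/-- Any finite tree with `n` vertices admits a Pythagorean embedding into
`ℝ^(n-1)`: there is a map `f` from the vertices to `EuclideanSpace ℝ (Fin (n-1))` such that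
`‖f x - f y‖² = d(x, y)` for all vertices `x y`, where `d` is the tree (shortest-path) metric. -/
theorem tree_pythagorean_embedding {V : Type*} [Fintype V] (G : SimpleGraph V)
    (hG : G.IsTree) (n : ℕ) (hn : Fintype.card V = n) :
    ∃ f : V → EuclideanSpace ℝ (Fin (n - 1)),
      ∀ x y : V, ‖f x - f y‖ ^ 2 = (G.dist x y : ℝ) := by
  classical
  obtain ⟨r⟩ := hG.connected.nonempty
  choose P hP using hG.connected.exists_isPath r
  have hcard : Fintype.card G.edgeSet = n - 1 := by
    have := hG.card_edgeFinset
    rw [G.edgeFinset_card] at this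
    omega
  set e : Fin (n - 1) ≃ G.edgeSet := (Fintype.equivFinOfCardEq hcard).symm
  have hrange : Set.range (fun i => (e i : Sym2 V)) = G.edgeSet := by
    ext a
    exact ⟨fun ⟨i, hi⟩ => hi ▸ (e i).2, fun ha => ⟨e.symm ⟨a, ha⟩, by simp⟩⟩
  have hpath_edges : ∀ v, ↑(P v).edges.toFinset ⊆ Set.range (fun i => (e i : Sym2 V)) := by
    intro v a ha
    rw [hrange]
    exact (P v).edges_subset_edgeSet (List.mem_toFinset.mp ha)
  refine ⟨fun v => WithLp.toLp 2 fun i =>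
    if (e i : Sym2 V) ∈ (P v).edges.toFinset then 1 else 0, fun x y => ?_⟩
  rw [EuclideanSpace.norm_sub_sq_indicator_eq_card_symmDiff
    (fun i j h => e.injective (Subtype.ext h)) (hpath_edges x) (hpath_edges y),
    hG.isAcyclic.card_symmDiff_edges_eq_dist (hP x) (hP y) (hG.connected x y)]
end

section
/- For any real number p with 0 < p < 2, there exists a finite tree T (with its tree metric d) such that for every n, there is no power-p embedding of T into ℝ^n; that is, no map f from the vertices of T to ℝ^n satisfies ‖f(x) − f(y)‖^p = d(x, y) for all vertices x, y. -/
/-!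
The leaves of a star are at distance `1` from its centre and `2` from each other, so a power-`p`
embedding sends them, relative to the image of the centre, to unit vectors at mutual distance
`2 ^ (1 / p) > √2`. Their pairwise inner products `1 - 2 ^ (2 / p) / 2` are then negative and
bounded away from `0`, and expanding `0 ≤ ‖∑ vᵢ‖ ^ 2` bounds the number of leaves independently
of the dimension.
-/

open Finset RealInnerProductSpace SimpleGraph

section UnitVectors

variable {ι E : Type*} [Fintype ι] [NormedAddCommGroup E] [InnerProductSpace ℝ E]

theorem card_sub_one_mul_le_of_inner_le_neg [Nonempty ι] {v : ι → E} {c : ℝ}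
    (hv : ∀ i, ‖v i‖ ≤ 1) (hvv : Pairwise fun i j ↦ ⟪v i, v j⟫ ≤ -c) :
    (Fintype.card ι - 1 : ℝ) * c ≤ 1 := by
  classical
  have hrow : ∀ i, ∑ j, ⟪v i, v j⟫ ≤ 1 - (Fintype.card ι - 1) * c := by
    intro i
    rw [← add_sum_erase _ _ (mem_univ i), real_inner_self_eq_norm_sq]
    have hoff : ∑ j ∈ univ.erase i, ⟪v i, v j⟫ ≤ ∑ j ∈ univ.erase i, -c :=
      sum_le_sum fun j hj ↦ hvv (ne_of_mem_erase hj).symm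
    have hsq : ‖v i‖ ^ 2 ≤ 1 := pow_le_one₀ (norm_nonneg _) (hv i)
    rw [sum_const, card_erase_of_mem (mem_univ i), card_univ, nsmul_eq_mul,
      Nat.cast_pred Fintype.card_pos] at hoff
    linarith
  have hsum : 0 ≤ Fintype.card ι * (1 - (Fintype.card ι - 1) * c) :=
    calc 0 ≤ ⟪∑ i, v i, ∑ j, v j⟫ := real_inner_self_nonneg
      _ = ∑ i, ∑ j, ⟪v i, v j⟫ := by simp_rw [sum_inner, inner_sum]
      _ ≤ ∑ _i : ι, (1 - (Fintype.card ι - 1) * c) := sum_le_sum fun i _ ↦ hrow i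
      _ = _ := by rw [sum_const, card_univ, nsmul_eq_mul]
  have hcard : (0 : ℝ) < Fintype.card ι := by exact_mod_cast Fintype.card_pos
  nlinarith

theorem card_sub_one_mul_le_of_norm_sub_eq [Nonempty ι] {x₀ : E} {x : ι → E} {r : ℝ}
    (hx₀ : ∀ i, ‖x i - x₀‖ = 1) (hx : Pairwise fun i j ↦ ‖x i - x j‖ = r) :
    (Fintype.card ι - 1 : ℝ) * (r ^ 2 - 2) ≤ 2 := by
  have key := card_sub_one_mul_le_of_inner_le_neg (v := fun i ↦ x i - x₀) (c := (r ^ 2 - 2) / 2)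
    (fun i ↦ (hx₀ i).le) fun i j hij ↦ by
      have h := norm_sub_sq_real (x i - x₀) (x j - x₀)
      rw [sub_sub_sub_cancel_right, hx hij, hx₀, hx₀] at h
      linarith
  linarith

end UnitVectors

section Star

variable {V : Type*} {r u v : V}

theorem dist_starGraph_center (h : v ≠ r) : (starGraph r).dist v r = 1 :=
  dist_eq_one_iff_adj.mpr (starGraph_center_adj' h.symm)

theorem dist_starGraph_of_ne_center (hu : u ≠ r) (hv : v ≠ r) (huv : u ≠ v) :
    (starGraph r).dist u v = 2 := by
  have : (starGraph r).edist u v = 2 := edist_eq_two_iff.mpr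
    ⟨huv, fun h ↦ (starGraph_adj.mp h).2.elim hu hv, r,
      ⟨starGraph_center_adj' hu.symm, starGraph_center_adj' hv.symm⟩⟩
  simp [SimpleGraph.dist, this]

end Star

theorem card_sub_one_mul_le_of_starGraph_rpow_embedding {ι E : Type*} [Fintype ι] [Nonempty ι]
    [NormedAddCommGroup E] [InnerProductSpace ℝ E] {p : ℝ} (hp : p ≠ 0) (f : Option ι → E)
    (hf : ∀ x y, ‖f x - f y‖ ^ p = ((starGraph none).dist x y : ℝ)) :
    (Fintype.card ι - 1 : ℝ) * ((2 : ℝ) ^ (2 / p) - 2) ≤ 2 := by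
  have hnorm : ∀ x y, ‖f x - f y‖ = ((starGraph none).dist x y : ℝ) ^ p⁻¹ := fun x y ↦ by
    rw [← hf, Real.rpow_rpow_inv (norm_nonneg _) hp]
  have hsq : ((2 : ℝ) ^ p⁻¹) ^ 2 = 2 ^ (2 / p) := by
    rw [← Real.rpow_natCast, ← Real.rpow_mul zero_le_two]; ring_nf
  rw [← hsq]
  refine card_sub_one_mul_le_of_norm_sub_eq (x₀ := f none) (x := f ∘ some) (fun i ↦ ?_)
    fun i j hij ↦ ?_
  · simp [hnorm, dist_starGraph_center]
  · simp [hnorm, dist_starGraph_of_ne_center, hij]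

/-- For any real `p` with `0 < p < 2`, there exists a finite tree `T`
(with its tree metric `d`) such that for every `n` there is no power-`p` embedding of `T`
into `ℝ^n`: no map `f` from the vertices of `T` to `EuclideanSpace ℝ (Fin n)` satisfies
`‖f x - f y‖ ^ p = d(x, y)` for all vertices `x y`. -/
theorem exists_tree_no_power_p_embedding (p : ℝ) (hp0 : 0 < p) (hp2 : p < 2) :
    ∃ (V : Type) (_ : Fintype V) (G : SimpleGraph V), G.IsTree ∧
      ∀ (n : ℕ) (f : V → EuclideanSpace ℝ (Fin n)),
        ¬ (∀ x y : V, ‖f x - f y‖ ^ p = (G.dist x y : ℝ)) := by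
  have ht : 2 < (2 : ℝ) ^ (2 / p) := by
    simpa only [Real.rpow_one] using
      Real.rpow_lt_rpow_of_exponent_lt one_lt_two ((one_lt_div hp0).mpr hp2)
  obtain ⟨m, hm⟩ := exists_nat_gt (2 / ((2 : ℝ) ^ (2 / p) - 2))
  refine ⟨Option (Fin (m + 1)), inferInstance, starGraph none, isTree_starGraph none,
    fun n f hf ↦ ?_⟩
  have hbound := card_sub_one_mul_le_of_starGraph_rpow_embedding hp0.ne' f hf
  rw [div_lt_iff₀ (sub_pos.mpr ht)] at hm
  rw [Fintype.card_fin, Nat.cast_add_one, add_sub_cancel_right] at hbound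
  linarith
end

section
/- A finite tree T (with its tree metric d) admits an isometric embedding into some Euclidean space ℝ^n if and only if T is a path (a chain), i.e., every vertex of T has degree at most 2. -/
/-!
If a vertex `v` had three neighbours, they would be pairwise at distance 2 (a tree has no
triangles), so in the strictly convex space `ℝⁿ` the image of `v` would be the midpoint of the
images of any two of them; two midpoints sharing an endpoint force the other endpoints to
coincide. Conversely, if all degrees are at most 2, pick an end `u` of the tree: every vertex has
at most one neighbour farther from `u`, so `d(u, ·)` is injective and additive along the tree,
and `v ↦ d(u, v)` is an isometry into `ℝ`.
-/

open Finset

namespace SimpleGraph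

variable {V : Type*} {G : SimpleGraph V}

lemma two_lt_degree_iff {v : V} [Fintype (G.neighborSet v)] :
    2 < G.degree v ↔ ∃ a b c, G.Adj v a ∧ G.Adj v b ∧ G.Adj v c ∧ a ≠ b ∧ a ≠ c ∧ b ≠ c := by
  simp only [← card_neighborFinset_eq_degree, two_lt_card_iff, mem_neighborFinset]

lemma exists_adj_dist_add_one_eq {u x : V} (h : G.dist u x ≠ 0) :
    ∃ w, G.Adj w x ∧ G.dist u w + 1 = G.dist u x := by
  rw [dist_comm] at h
  obtain ⟨p, hp⟩ := exists_walk_of_dist_ne_zero h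
  cases p with
  | nil => simp at h
  | @cons _ w _ hxw q =>
    refine ⟨w, hxw.symm, le_antisymm ?_ ?_⟩
    · have := dist_le q.reverse
      rw [Walk.length_reverse] at this
      rw [dist_comm, Walk.length_cons] at hp
      omega
    · obtain ⟨r, hr⟩ := q.reverse.reachable.exists_walk_length_eq_dist
      simpa [hr] using dist_le (r.concat hxw.symm)

lemma IsAcyclic.dist_eq_two_of_adj_of_adj (hG : G.IsAcyclic) {v x y : V} (hx : G.Adj v x)
    (hy : G.Adj v y) (hxy : x ≠ y) : G.dist x y = 2 := by
  -- a triangle `v x y` would put the adjacent vertices `x`, `y` at equal distance from `v`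
  have hnadj : ¬ G.Adj x y := fun hadj ↦
    hG.dist_ne_of_adj hadj hx.reachable <| by
      rw [dist_eq_one_iff_adj.2 hx, dist_eq_one_iff_adj.2 hy]
  have : G.edist x y = 2 := edist_eq_two_iff.2 ⟨hxy, hnadj, v, hx.symm, hy.symm⟩
  simp [dist, this]

section Euclidean

variable {E : Type*} [NormedAddCommGroup E] [NormedSpace ℝ E] [StrictConvexSpace ℝ E]

lemma IsAcyclic.eq_midpoint_of_adj_of_adj (hG : G.IsAcyclic) {f : V → E}
    (hf : ∀ x y, Dist.dist (f x) (f y) = G.dist x y) {v x y : V} (hx : G.Adj v x) (hy : G.Adj v y)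
    (hxy : x ≠ y) : f v = midpoint ℝ (f x) (f y) := by
  apply eq_midpoint_of_dist_eq_half <;>
    simp [hf, hG.dist_eq_two_of_adj_of_adj hx hy hxy, dist_comm, hx, hy]

lemma IsAcyclic.degree_le_two_of_isometry (hG : G.IsAcyclic) {f : V → E}
    (hf : ∀ x y, Dist.dist (f x) (f y) = G.dist x y) (v : V) [Fintype (G.neighborSet v)] :
    G.degree v ≤ 2 := by
  by_contra! h
  obtain ⟨a, b, c, ha, hb, hc, hab, hac, hbc⟩ := two_lt_degree_iff.1 h
  have hmid_b := hG.eq_midpoint_of_adj_of_adj hf ha hb hab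
  have hmid_c := hG.eq_midpoint_of_adj_of_adj hf ha hc hac
  have hbc_eq : f b = f c := by
    rw [← midpoint_eq_iff.1 hmid_b.symm, midpoint_eq_iff.1 hmid_c.symm]
  have := hf b c
  simp [hbc_eq, hG.dist_eq_two_of_adj_of_adj hb hc hbc] at this

end Euclidean

section Chain

variable [G.LocallyFinite] {u : V}

lemma Connected.eq_of_adj_of_dist_eq_add_one (hc : G.Connected) (hu : G.degree u ≤ 1)
    (hdeg : ∀ v, G.degree v ≤ 2) {w x y : V} (hx : G.Adj w x) (hy : G.Adj w y)
    (hxd : G.dist u x = G.dist u w + 1) (hyd : G.dist u y = G.dist u w + 1) : x = y := by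
  by_contra hxy
  by_cases hw : w = u
  · subst hw
    have : 1 < G.degree w := by
      rw [← card_neighborFinset_eq_degree, one_lt_card]
      exact ⟨x, by simpa using hx, y, by simpa using hy, hxy⟩
    omega
  · -- away from the end `u`, one of the two edges at `w` is spent on a neighbour closer to `u`
    obtain ⟨z, hz, hzd⟩ := exists_adj_dist_add_one_eq (hc.pos_dist_of_ne (Ne.symm hw)).ne'
    have hxz : x ≠ z := by rintro rfl; omega
    have hyz : y ≠ z := by rintro rfl; omega
    have := two_lt_degree_iff.2 ⟨x, y, z, hx, hy, hz.symm, hxy, hxz, hyz⟩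
    exact (hdeg w).not_gt this

lemma Connected.injective_dist_of_degree_le (hc : G.Connected) (hu : G.degree u ≤ 1)
    (hdeg : ∀ v, G.degree v ≤ 2) : Function.Injective (G.dist u) := by
  intro x y hxy
  induction h : G.dist u x generalizing x y with
  | zero =>
    rw [h] at hxy
    rw [← hc.dist_eq_zero_iff.1 h, ← hc.dist_eq_zero_iff.1 hxy.symm]
  | succ k ih =>
    obtain ⟨x', hx', hx'd⟩ := exists_adj_dist_add_one_eq (ne_of_eq_of_ne h k.succ_ne_zero)
    obtain ⟨y', hy', hy'd⟩ :=
      exists_adj_dist_add_one_eq (ne_of_eq_of_ne (hxy.symm.trans h) k.succ_ne_zero)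
    obtain rfl : x' = y' := ih (by omega) (by omega)
    exact hc.eq_of_adj_of_dist_eq_add_one hu hdeg hx' hy' (by omega) (by omega)

lemma Connected.dist_add_dist_eq_of_dist_le (hc : G.Connected) (hu : G.degree u ≤ 1)
    (hdeg : ∀ v, G.degree v ≤ 2) {x y : V} (hxy : G.dist u x ≤ G.dist u y) :
    G.dist u x + G.dist x y = G.dist u y := by
  induction h : G.dist u y generalizing y with
  | zero =>
    obtain rfl : x = y := hc.injective_dist_of_degree_le hu hdeg (by omega)
    simp [h]
  | succ k ih =>
    rcases hxy.lt_or_eq with hlt | heq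
    · obtain ⟨y', hy', hy'd⟩ := exists_adj_dist_add_one_eq (ne_of_eq_of_ne h k.succ_ne_zero)
      have h₁ := ih (y := y') (by omega) (by omega)
      have h₂ : G.dist x y ≤ G.dist x y' + G.dist y' y := hc.dist_triangle
      have h₃ : G.dist u y ≤ G.dist u x + G.dist x y := hc.dist_triangle
      rw [dist_eq_one_iff_adj.2 hy'] at h₂
      omega
    · obtain rfl : x = y := hc.injective_dist_of_degree_le hu hdeg heq
      simp [h]

lemma Connected.dist_eq_abs_sub_dist (hc : G.Connected) (hu : G.degree u ≤ 1)
    (hdeg : ∀ v, G.degree v ≤ 2) (x y : V) :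
    (G.dist x y : ℝ) = |(G.dist u x : ℝ) - G.dist u y| := by
  wlog hxy : G.dist u x ≤ G.dist u y generalizing x y
  · rw [dist_comm, abs_sub_comm]
    exact this y x (by omega)
  rw [← hc.dist_add_dist_eq_of_dist_le hu hdeg hxy]
  push_cast
  rw [sub_add_cancel_left, abs_neg, abs_of_nonneg (Nat.cast_nonneg _)]

end Chain

lemma IsTree.exists_degree_le_one [Fintype V] [DecidableRel G.Adj] (hG : G.IsTree) :
    ∃ u, G.degree u ≤ 1 := by
  obtain ⟨u⟩ := hG.connected.nonempty
  rcases subsingleton_or_nontrivial V with hV | hV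
  · exact ⟨u, by grind [G.degree_lt_card_verts u, Fintype.card_le_one_iff_subsingleton]⟩
  · obtain ⟨u, hu⟩ := hG.exists_vert_degree_one_of_nontrivial
    exact ⟨u, hu.le⟩

end SimpleGraph

/-- A finite tree `T` (with its tree metric) admits an isometric embedding
into some Euclidean space `ℝ^n` if and only if `T` is a path (chain), i.e. every vertex has
degree at most 2. -/
theorem tree_isometric_embedding_iff_path {V : Type*} [Fintype V] (G : SimpleGraph V)
    [DecidableRel G.Adj] (hG : G.IsTree) :
    (∃ (n : ℕ) (f : V → EuclideanSpace ℝ (Fin n)),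
        ∀ x y : V, ‖f x - f y‖ = (G.dist x y : ℝ)) ↔ ∀ v : V, G.degree v ≤ 2 := by
  constructor
  · rintro ⟨n, f, hf⟩ v
    exact hG.isAcyclic.degree_le_two_of_isometry (by simpa [dist_eq_norm] using hf) v
  · intro hdeg
    obtain ⟨u, hu⟩ := hG.exists_degree_le_one
    refine ⟨1, fun v ↦ EuclideanSpace.single 0 (G.dist u v : ℝ), fun x y ↦ ?_⟩
    rw [← dist_eq_norm, PiLp.dist_single_same, Real.dist_eq,
      hG.connected.dist_eq_abs_sub_dist hu hdeg x y]
end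

section
/- For any real number p > 2 and any finite tree T with n vertices and tree metric d, there exists N and a power-p embedding of T into ℝ^N, i.e., a map f from the vertices of T to ℝ^N with ‖f(x) − f(y)‖^p = d(x, y) for all vertices x, y. -/
/-!
For `0 < β < 1` and `d ≥ 0`, `d ^ β = C⁻¹ ∫₀^∞ (1 - e^{-t d}) t^{-β-1} dt` with `C > 0`. On a tree
the kernels `e^{-t d(x,y)} = q ^ d(x,y)`, `q = e^{-t} ≤ 1`, are positive semidefinite: moving the
weight `η v` of a vertex `v` of the support farthest from a root, scaled by `q`, to its parent `u`
lowers the quadratic form by exactly `(1 - q²) η_v²`, because `d(x,v) = d(x,u) + 1` for every other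
vertex `x` of the support. Hence `d ^ β` is conditionally negative semidefinite, so by Schoenberg's
criterion (through the Gram matrix `(d(r,x)^β + d(r,y)^β - d(x,y)^β) / 2`) it is the squared
distance of a point configuration in Euclidean space. Take `β = 2 / p`.
-/

open MeasureTheory Set Real

section BernsteinIntegral

variable {β : ℝ}

lemma integrableOn_one_sub_exp_mul_rpow (hβ0 : 0 < β) (hβ1 : β < 1) {c : ℝ} (hc : 0 ≤ c) :
    IntegrableOn (fun t => (1 - exp (-(c * t))) * t ^ (-β - 1)) (Ioi 0) := by
  have hcont : ContinuousOn (fun t => (1 - exp (-(c * t))) * t ^ (-β - 1)) (Ioi 0) :=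
    ContinuousOn.mul (by fun_prop) (continuousOn_id.rpow_const fun t ht => Or.inl (ne_of_gt ht))
  have hmeas : ∀ s ⊆ Ioi (0 : ℝ), MeasurableSet s →
      AEStronglyMeasurable (fun t => (1 - exp (-(c * t))) * t ^ (-β - 1)) (volume.restrict s) :=
    fun s hs hsm => (hcont.mono hs).aestronglyMeasurable hsm
  have h0 : IntegrableOn (fun t => (1 - exp (-(c * t))) * t ^ (-β - 1)) (Ioc 0 1) := by
    have hg : IntegrableOn (fun t : ℝ => c * t ^ (-β)) (Ioc 0 1) := by
      refine Integrable.const_mul ?_ c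
      rw [← IntegrableOn, ← intervalIntegrable_iff_integrableOn_Ioc_of_le zero_le_one]
      exact intervalIntegral.intervalIntegrable_rpow' (by linarith)
    refine hg.mono' (hmeas _ Ioc_subset_Ioi_self measurableSet_Ioc) ?_
    refine (ae_restrict_iff' measurableSet_Ioc).mpr (ae_of_all _ fun t ⟨ht0, _⟩ => ?_)
    have h1 : 1 - exp (-(c * t)) ≤ c * t := by linarith [add_one_le_exp (-(c * t))]
    have h2 : 0 ≤ 1 - exp (-(c * t)) := by
      have : exp (-(c * t)) ≤ 1 := exp_le_one_iff.mpr (by nlinarith)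
      linarith
    rw [norm_of_nonneg (by positivity)]
    calc (1 - exp (-(c * t))) * t ^ (-β - 1) ≤ c * t * t ^ (-β - 1) := by gcongr
      _ = c * t ^ (-β) := by
        rw [mul_assoc, ← rpow_one_add' ht0.le (by linarith)]; ring_nf
  have h1 : IntegrableOn (fun t => (1 - exp (-(c * t))) * t ^ (-β - 1)) (Ioi 1) := by
    refine (integrableOn_Ioi_rpow_of_lt (a := -β - 1) (by linarith) zero_lt_one).mono'
      (hmeas _ (Ioi_subset_Ioi zero_le_one) measurableSet_Ioi) ?_
    refine (ae_restrict_iff' measurableSet_Ioi).mpr (ae_of_all _ fun t ht => ?_)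
    have ht0 : (0 : ℝ) < t := zero_lt_one.trans ht
    have h1 : exp (-(c * t)) ≤ 1 := exp_le_one_iff.mpr (by nlinarith)
    rw [norm_of_nonneg (mul_nonneg (by linarith) (by positivity))]
    exact mul_le_of_le_one_left (by positivity) (by linarith [exp_pos (-(c * t))])
  simpa [Ioc_union_Ioi_eq_Ioi zero_le_one] using h0.union h1

lemma integral_one_sub_exp_mul_rpow (hβ : β ≠ 0) {c : ℝ} (hc : 0 ≤ c) :
    ∫ t in Ioi 0, (1 - exp (-(c * t))) * t ^ (-β - 1)
      = c ^ β * ∫ t in Ioi 0, (1 - exp (-t)) * t ^ (-β - 1) := by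
  rcases hc.eq_or_lt with rfl | hc
  · simp [zero_rpow hβ]
  have hscale : EqOn (fun t => (1 - exp (-(c * t))) * t ^ (-β - 1))
      (fun t => c ^ (β + 1) * ((1 - exp (-(c * t))) * (c * t) ^ (-β - 1))) (Ioi 0) := by
    intro t ht
    have hc1 : c ^ (β + 1) * c ^ (-β - 1) = 1 := by
      rw [← rpow_add hc, show β + 1 + (-β - 1) = 0 by ring, rpow_zero]
    simp only [mul_rpow hc.le (le_of_lt ht)]
    linear_combination -((1 - exp (-(c * t))) * t ^ (-β - 1)) * hc1
  rw [setIntegral_congr_fun measurableSet_Ioi hscale, integral_const_mul,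
    integral_comp_mul_left_Ioi (fun t => (1 - exp (-t)) * t ^ (-β - 1)) 0 hc, mul_zero,
    smul_eq_mul, ← mul_assoc, ← rpow_neg_one, ← rpow_add hc]
  ring_nf

lemma integral_one_sub_exp_rpow_pos (hβ0 : 0 < β) (hβ1 : β < 1) :
    0 < ∫ t in Ioi 0, (1 - exp (-t)) * t ^ (-β - 1) := by
  have hpos : ∀ t ∈ Ioi (0 : ℝ), 0 < (1 - exp (-t)) * t ^ (-β - 1) := fun t ht =>
    mul_pos (by linarith [exp_lt_one_iff.mpr (neg_lt_zero.mpr ht)]) (rpow_pos_of_pos ht _)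
  have hint := integrableOn_one_sub_exp_mul_rpow hβ0 hβ1 zero_le_one
  simp only [one_mul] at hint
  rw [setIntegral_pos_iff_support_of_nonneg_ae
    ((ae_restrict_iff' measurableSet_Ioi).mpr (ae_of_all _ fun t ht => (hpos t ht).le)) hint,
    inter_eq_right.mpr fun t ht => Function.mem_support.mpr (hpos t ht).ne']
  simp

end BernsteinIntegral

namespace Matrix

variable {ι : Type*} [Fintype ι]

def CondNegSemidef (D : Matrix ι ι ℝ) : Prop :=
  ∀ η : ι → ℝ, ∑ i, η i = 0 → η ⬝ᵥ D *ᵥ η ≤ 0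

lemma dotProduct_mulVec_self_eq_sum (M : Matrix ι ι ℝ) (η : ι → ℝ) :
    η ⬝ᵥ M *ᵥ η = ∑ i, ∑ j, η i * η j * M i j := by
  simp only [dotProduct, mulVec, Finset.mul_sum]
  exact Finset.sum_congr rfl fun i _ => Finset.sum_congr rfl fun j _ => by ring

lemma dotProduct_mulVec_add_single [DecidableEq ι]
    {K : Matrix ι ι ℝ} (hK : K.IsSymm) (η : ι → ℝ) (v : ι) (a : ℝ) :
    (η + Pi.single v a) ⬝ᵥ K *ᵥ (η + Pi.single v a)
      = η ⬝ᵥ K *ᵥ η + 2 * a * ∑ x, η x * K x v + a ^ 2 * K v v := by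
  have hleft : Pi.single v a ⬝ᵥ K *ᵥ η = a * ∑ x, η x * K x v := by
    rw [single_dotProduct, mulVec, dotProduct, Finset.mul_sum, Finset.mul_sum]
    refine Finset.sum_congr rfl fun x _ => ?_
    rw [hK.apply x v]; ring
  have hright : η ⬝ᵥ K *ᵥ Pi.single v a = a * ∑ x, η x * K x v := by
    simp [mulVec, dotProduct, Pi.single_apply, Finset.mul_sum]
    exact Finset.sum_congr rfl fun _ _ => by ring
  have hdiag : Pi.single v a ⬝ᵥ K *ᵥ Pi.single v a = a ^ 2 * K v v := by
    simp [mulVec, dotProduct, Pi.single_apply]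
    ring
  rw [mulVec_add, dotProduct_add, add_dotProduct, add_dotProduct, hleft, hright, hdiag]
  ring

theorem condNegSemidef_map_rpow_of_posSemidef_map_exp {D : Matrix ι ι ℝ} (hD : ∀ i j, 0 ≤ D i j)
    (hexp : ∀ t : ℝ, 0 < t → (D.map fun d => exp (-(d * t))).PosSemidef) {β : ℝ}
    (hβ0 : 0 < β) (hβ1 : β < 1) : (D.map (· ^ β)).CondNegSemidef := by
  intro η hη
  set F : ℝ → ι → ι → ℝ :=
    fun t i j => η i * η j * ((1 - exp (-(D i j * t))) * t ^ (-β - 1))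
  have hF : ∀ i j, IntegrableOn (F · i j) (Ioi 0) := fun i j =>
    (integrableOn_one_sub_exp_mul_rpow hβ0 hβ1 (hD i j)).const_mul _
  have hrep : (η ⬝ᵥ D.map (· ^ β) *ᵥ η) * ∫ t in Ioi 0, (1 - exp (-t)) * t ^ (-β - 1)
      = ∫ t in Ioi 0, ∑ i, ∑ j, F t i j := by
    rw [integral_finsetSum _ fun i _ => integrable_finsetSum _ fun j _ => hF i j]
    simp_rw [integral_finsetSum _ fun j _ => hF _ j]
    simp only [F, dotProduct_mulVec_self_eq_sum, map_apply, Finset.sum_mul, integral_const_mul,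
      integral_one_sub_exp_mul_rpow hβ0.ne' (hD _ _)]
    exact Finset.sum_congr rfl fun i _ => Finset.sum_congr rfl fun j _ => by ring
  have hpt : ∀ t ∈ Ioi (0 : ℝ), ∑ i, ∑ j, F t i j ≤ 0 := by
    intro t ht
    have hpsd := (hexp t ht).dotProduct_mulVec_nonneg η
    have hsq : ∑ i, ∑ j, η i * η j = 0 := by rw [← Finset.sum_mul_sum, hη, zero_mul]
    have : ∑ i, ∑ j, F t i j = t ^ (-β - 1) *
        (∑ i, ∑ j, η i * η j - ∑ i, ∑ j, η i * η j * exp (-(D i j * t))) := by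
      simp only [F, Finset.mul_sum, ← Finset.sum_sub_distrib]
      exact Finset.sum_congr rfl fun i _ => Finset.sum_congr rfl fun j _ => by ring
    rw [this, hsq]
    simp only [star_trivial, dotProduct_mulVec_self_eq_sum, map_apply] at hpsd
    exact mul_nonpos_of_nonneg_of_nonpos (rpow_pos_of_pos ht _).le (by linarith)
  have hint : ∫ t in Ioi 0, ∑ i, ∑ j, F t i j ≤ 0 := setIntegral_nonpos measurableSet_Ioi hpt
  rw [← hrep] at hint
  exact nonpos_of_mul_nonpos_left hint (integral_one_sub_exp_rpow_pos hβ0 hβ1)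

open scoped MatrixOrder ComplexOrder in
theorem PosSemidef.exists_gram_eq {𝕜 : Type*} [RCLike 𝕜] {M : Matrix ι ι 𝕜}
    (hM : M.PosSemidef) : ∃ v : ι → EuclideanSpace 𝕜 ι, gram 𝕜 v = M := by
  classical
  obtain ⟨B, rfl⟩ := CStarAlgebra.nonneg_iff_eq_star_mul_self.mp hM.nonneg
  refine ⟨fun i => WithLp.toLp 2 (fun k => B k i), ?_⟩
  ext i j
  simp [gram, mul_apply, EuclideanSpace.inner_eq_star_dotProduct, dotProduct, mul_comm]

theorem CondNegSemidef.posSemidef_gromov {D : Matrix ι ι ℝ} (hD : D.CondNegSemidef)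
    (hsymm : D.IsSymm) {r : ι} (hr : D r r = 0) :
    (of fun x y => (D r x + D r y - D x y) / 2).PosSemidef := by
  classical
  refine .of_dotProduct_mulVec_nonneg (IsSymm.ext fun x y => by simp [hsymm.apply x y]; ring)
    fun ξ => ?_
  have hneg := hD (ξ + Pi.single r (-∑ i, ξ i)) (by simp [Finset.sum_add_distrib])
  rw [dotProduct_mulVec_add_single hsymm, hr, dotProduct_mulVec_self_eq_sum] at hneg
  have : ∑ i, ∑ j, ξ i * ξ j * ((D r i + D r j - D i j) / 2)
      = (∑ i, ξ i) * (∑ i, ξ i * D i r) - (∑ i, ∑ j, ξ i * ξ j * D i j) / 2 := by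
    calc _ = ∑ i, ∑ j, ((ξ i * D i r) * ξ j / 2 + ξ i * (ξ j * D j r) / 2
            - ξ i * ξ j * D i j / 2) :=
          Finset.sum_congr rfl fun i _ => Finset.sum_congr rfl fun j _ => by
            rw [hsymm.apply i r, hsymm.apply j r]; ring
      _ = _ := by
        simp only [Finset.sum_add_distrib, Finset.sum_sub_distrib, ← Finset.sum_div,
          ← Finset.sum_mul_sum]
        ring
  simp only [star_trivial, dotProduct_mulVec_self_eq_sum, of_apply, this]
  linarith

theorem CondNegSemidef.exists_norm_sub_sq_eq {D : Matrix ι ι ℝ} (hD : D.CondNegSemidef)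
    (hsymm : D.IsSymm) (hdiag : ∀ i, D i i = 0) :
    ∃ f : ι → EuclideanSpace ℝ ι, ∀ i j, ‖f i - f j‖ ^ 2 = D i j := by
  cases isEmpty_or_nonempty ι with
  | inl _ => exact ⟨isEmptyElim, isEmptyElim⟩
  | inr h =>
    obtain ⟨r⟩ := h
    obtain ⟨f, hf⟩ := (hD.posSemidef_gromov hsymm (hdiag r)).exists_gram_eq
    have hinner : ∀ i j, inner ℝ (f i) (f j) = (D r i + D r j - D i j) / 2 :=
      fun i j => congrFun (congrFun hf i) j
    refine ⟨f, fun i j => ?_⟩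
    rw [norm_sub_sq_real, ← real_inner_self_eq_norm_sq, ← real_inner_self_eq_norm_sq, hinner,
      hinner, hinner, hdiag, hdiag, hsymm.apply]
    ring

end Matrix

namespace SimpleGraph

variable {V : Type*} {G : SimpleGraph V}

lemma IsTree.length_eq_dist_of_isPath (hG : G.IsTree) {x y : V} {p : G.Walk x y}
    (hp : p.IsPath) : p.length = G.dist x y := by
  obtain ⟨q, hq, hql⟩ := hG.connected.exists_path_of_dist x y
  rw [(hG.existsUnique_path x y).unique hp hq, hql]

lemma Connected.exists_adj_dist_add_one_eq (hG : G.Connected) {r v : V} (hv : v ≠ r) :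
    ∃ u, G.Adj u v ∧ G.dist r u + 1 = G.dist r v := by
  obtain ⟨p, -, hp⟩ := hG.exists_path_of_dist r v
  have hadj := p.adj_penultimate (Walk.not_nil_of_ne hv.symm)
  refine ⟨p.penultimate, hadj, le_antisymm ?_ ?_⟩
  · have hlen := congrArg Walk.length (p.concat_dropLast hadj)
    rw [Walk.length_concat] at hlen
    have := dist_le p.dropLast
    omega
  · simpa [dist_eq_one_iff_adj.mpr hadj] using
      hG.dist_triangle (u := r) (v := p.penultimate) (w := v)

lemma IsTree.dist_eq_dist_add_one_of_dist_le (hG : G.IsTree) {r u v x : V} (huv : G.Adj u v)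
    (hu : G.dist r u + 1 = G.dist r v) (hx : G.dist r x ≤ G.dist r v) (hxv : x ≠ v) :
    G.dist x v = G.dist x u + 1 := by
  classical
  obtain ⟨t, -, ht⟩ := hG.connected.exists_path_of_dist r x
  obtain ⟨s, -, hs⟩ := hG.connected.exists_path_of_dist r u
  have hvt : v ∉ t.support := fun hv => by
    have := dist_le (t.takeUntil v hv)
    have := dist_le (t.dropUntil v hv)
    have hsplit := congrArg Walk.length (t.take_spec hv)
    rw [Walk.length_append] at hsplit
    have := hG.connected.pos_dist_of_ne hxv.symm
    omega
  have hvs : v ∉ s.support := fun hv => by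
    have := dist_le (s.takeUntil v hv)
    have := s.length_takeUntil_le_length hv
    omega
  -- the walk `x ⇝ r ⇝ u` avoids `v`, so the edge `uv` extends it to the path from `x` to `v`
  have hP := (t.reverse.append s).bypass_isPath
  have hvP : v ∉ (t.reverse.append s).bypass.support := fun hv => by
    have := (t.reverse.append s).support_bypass_subset_support hv
    rw [Walk.mem_support_append_iff, Walk.support_reverse, List.mem_reverse] at this
    tauto
  have := hG.length_eq_dist_of_isPath (hP.concat hvP huv)
  rwa [Walk.length_concat, hG.length_eq_dist_of_isPath hP, eq_comm] at this

open Matrix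

lemma IsTree.dotProduct_pow_dist_mulVec_eq_of_adj [Fintype V] [DecidableEq V] (hG : G.IsTree)
    (q : ℝ) {r u v : V} (huv : G.Adj u v) (hu : G.dist r u + 1 = G.dist r v) {η : V → ℝ}
    (hη : ∀ x, η x ≠ 0 → G.dist r x ≤ G.dist r v) :
    η ⬝ᵥ (of fun x y => q ^ G.dist x y) *ᵥ η
      = (Function.update η v 0 + Pi.single u (q * η v)) ⬝ᵥ (of fun x y => q ^ G.dist x y) *ᵥ
          (Function.update η v 0 + Pi.single u (q * η v)) + (1 - q ^ 2) * η v ^ 2 := by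
  set K : Matrix V V ℝ := of fun x y => q ^ G.dist x y
  set ηt := Function.update η v 0
  have hK : K.IsSymm := IsSymm.ext fun x y => by simp [K, dist_comm]
  have hdecomp : η = ηt + Pi.single v (η v) := by
    ext x; by_cases hx : x = v <;> simp [ηt, hx]
  have hpush : ∑ x, ηt x * K x v = q * ∑ x, ηt x * K x u := by
    rw [Finset.mul_sum]
    refine Finset.sum_congr rfl fun x _ => ?_
    by_cases hx : ηt x = 0
    · simp [hx]
    have hxv : x ≠ v := by rintro rfl; simp [ηt] at hx
    have hx' : η x ≠ 0 := by simpa [ηt, hxv] using hx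
    simp [K, hG.dist_eq_dist_add_one_of_dist_le huv hu (hη x hx') hxv, pow_succ]
    ring
  conv_lhs => rw [hdecomp]
  rw [dotProduct_mulVec_add_single hK, dotProduct_mulVec_add_single hK, hpush]
  simp [K]
  ring

lemma IsTree.exists_dotProduct_pow_dist_mulVec_eq_add [Fintype V] [DecidableEq V]
    (hG : G.IsTree) (q : ℝ) {r x₀ : V} {s : Finset V} {η : V → ℝ} (hs : ∀ x ∉ s, η x = 0)
    (hx₀s : x₀ ∈ s) (hx₀r : x₀ ≠ r) :
    ∃ (s' : Finset V) (η' : V → ℝ) (a : ℝ), ∑ x ∈ s', G.dist r x < ∑ x ∈ s, G.dist r x ∧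
      (∀ x ∉ s', η' x = 0) ∧ η ⬝ᵥ (of fun x y => q ^ G.dist x y) *ᵥ η
        = η' ⬝ᵥ (of fun x y => q ^ G.dist x y) *ᵥ η' + (1 - q ^ 2) * a ^ 2 := by
  obtain ⟨v, hvs, hvmax⟩ := s.exists_max_image (G.dist r) ⟨x₀, hx₀s⟩
  have hvr : v ≠ r := by
    rintro rfl
    have := hvmax x₀ hx₀s
    simp_all [hG.connected.dist_eq_zero_iff, eq_comm]
  obtain ⟨u, huv, hu⟩ := hG.connected.exists_adj_dist_add_one_eq hvr
  have hη : ∀ x, η x ≠ 0 → G.dist r x ≤ G.dist r v :=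
    fun x hx => hvmax x (by_contra fun h => hx (hs x h))
  refine ⟨insert u (s.erase v), _, η v, ?_, ?_, hG.dotProduct_pow_dist_mulVec_eq_of_adj q huv hu hη⟩
  · have := Finset.add_sum_erase s (G.dist r) hvs
    by_cases hus : u ∈ s.erase v
    · rw [Finset.insert_eq_of_mem hus]; omega
    · rw [Finset.sum_insert hus]; omega
  · intro x hx
    simp only [Finset.mem_insert, Finset.mem_erase, not_or] at hx
    by_cases hxv : x = v
    · simp [hxv, huv.ne.symm]
    · simp [hxv, hx.1, hs x (by tauto)]

theorem IsTree.posSemidef_pow_dist [Fintype V] (hG : G.IsTree) {q : ℝ} (hq0 : 0 ≤ q)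
    (hq1 : q ≤ 1) : (of fun x y => q ^ G.dist x y).PosSemidef := by
  classical
  set K : Matrix V V ℝ := of fun x y => q ^ G.dist x y
  have hK : K.IsSymm := IsSymm.ext fun x y => by simp [K, dist_comm]
  obtain ⟨r⟩ := hG.connected.nonempty
  suffices h : ∀ n (s : Finset V) (η : V → ℝ), ∑ x ∈ s, G.dist r x = n →
      (∀ x ∉ s, η x = 0) → 0 ≤ η ⬝ᵥ K *ᵥ η from
    .of_dotProduct_mulVec_nonneg hK fun η => h _ Finset.univ η rfl (by simp)
  intro n
  induction n using Nat.strong_induction_on with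
  | _ n ih =>
  intro s η hn hs
  by_cases hsr : ∀ x ∈ s, x = r
  · have hη : η = 0 + Pi.single r (η r) := by
      ext x
      by_cases hx : x = r
      · simp [hx]
      · simp [hx, hs x (hx ∘ hsr x)]
    rw [hη, dotProduct_mulVec_add_single hK]
    simp [K]
    positivity
  push Not at hsr
  obtain ⟨x₀, hx₀s, hx₀r⟩ := hsr
  obtain ⟨s', η', a, hlt, hs', heq⟩ := hG.exists_dotProduct_pow_dist_mulVec_eq_add q hs hx₀s hx₀r
  rw [heq]
  have := ih _ (hn ▸ hlt) s' η' rfl hs'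
  have : 0 ≤ (1 - q ^ 2) * a ^ 2 := mul_nonneg (by nlinarith) (sq_nonneg _)
  linarith

end SimpleGraph

/-- For any real `p > 2` and any finite tree `T` with tree metric `d`,
there is an `N` and a power-`p` embedding of `T` into `ℝ^N`: a map `f` from the vertices
of `T` to `EuclideanSpace ℝ (Fin N)` with `‖f x - f y‖ ^ p = d(x, y)` for all `x y`. -/
theorem tree_power_p_embedding_of_two_lt (p : ℝ) (hp : 2 < p)
    {V : Type*} [Fintype V] (G : SimpleGraph V) (hG : G.IsTree) :
    ∃ (N : ℕ) (f : V → EuclideanSpace ℝ (Fin N)),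
      ∀ x y : V, ‖f x - f y‖ ^ p = (G.dist x y : ℝ) := by
  obtain ⟨D, hD⟩ : ∃ D : Matrix V V ℝ, ∀ x y, D x y = G.dist x y :=
    ⟨.of fun x y => _, fun _ _ => rfl⟩
  have hβ0 : 0 < 2 / p := by positivity
  have hβ1 : 2 / p < 1 := (div_lt_one (by linarith)).mpr hp
  have hexp : ∀ t : ℝ, 0 < t → (D.map fun d => exp (-(d * t))).PosSemidef := fun t ht => by
    convert hG.posSemidef_pow_dist (exp_pos (-t)).le (exp_le_one_iff.mpr (by linarith)) using 1
    ext x y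
    simp [hD, ← exp_nat_mul]
  have hsymm : D.IsSymm := Matrix.IsSymm.ext fun x y => by rw [hD, hD, G.dist_comm]
  have hneg := Matrix.condNegSemidef_map_rpow_of_posSemidef_map_exp
    (fun x y => hD x y ▸ Nat.cast_nonneg _) hexp hβ0 hβ1
  obtain ⟨f, hf⟩ := hneg.exists_norm_sub_sq_eq (hsymm.map _) fun x => by
    simp [hD, zero_rpow hβ0.ne']
  let e := LinearIsometryEquiv.piLpCongrLeft 2 ℝ ℝ (Fintype.equivFin V)
  refine ⟨Fintype.card V, fun x => e (f x), fun x y => ?_⟩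
  calc ‖e (f x) - e (f y)‖ ^ p = (‖f x - f y‖ ^ (2 : ℝ)) ^ (p / 2) := by
        rw [← map_sub, e.norm_map, ← rpow_mul (norm_nonneg _)]
        field_simp
    _ = ((G.dist x y : ℝ) ^ (2 / p)) ^ (p / 2) := by rw [rpow_two, hf x y, Matrix.map_apply, hD]
    _ = G.dist x y := by
        rw [← rpow_mul (Nat.cast_nonneg _)]
        field_simp
        exact rpow_one _
end
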